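/- (Proposition 6, case a > 0.) Suppose π(θ, e) = π₀(e) − θ·(a e + b) with a > 0, for a twice continuously differentiable, strictly concave π₀ : E → ℝ, with π(θ,0) < π(θ,ē) for all θ ∈ Θ, and the density f is continuously differentiable and strictly positive on the interior of Θ. If there exists θ_▲ ∈ Θ such that e̲(θ) = ē for all θ ∈ [θ̲, θ_▲] and f is nonincreasing on [θ_▲, θ̄], then full disclosure Pareto dominates every other policy: for every admissible policy d, Π(d) ≤ Π(d_id) and Γ(d) ≥ Γ(d_id); consequently, any admissible efficient policy d satisfies Π(d) = Π(d_id) and Γ(d) = Γ(d_id). -/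

import Mathlib

/-!
Under every admissible policy `d` the least maximizer `γ_d(θ)` is nonincreasing in `θ`
(single crossing, `a > 0`), and by the envelope theorem
`π_d(θ) = π_d(θ_▲) - ∫_{θ_▲}^θ (a γ_d + b)`. Full disclosure maximizes over all of `E`, so
`π_d ≤ π_id` pointwise, while both policies give `ē` to the irresponsive types `θ ≤ θ_▲`.
Comparing the two envelope formulas, `G(θ) = ∫_{θ_▲}^θ (γ_d - γ_id)` is nonnegative on
`[θ_▲, θ̄]`. As `f` is nonnegative and nonincreasing there, the layer-cake decomposition of `f`
writes `∫ (γ_d - γ_id) f` as an average of values of `G`, so `Γ(d) ≥ Γ(id)`.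
-/

open Set MeasureTheory

noncomputable section

/-- The set of belief-compatible emission levels under disclosure policy `d`,
on the emission space `E = [0, ebar]`. -/
def BCset (ebar : ℝ) (d : ℝ → ℝ) : Set ℝ :=
  {e | e ∈ Icc 0 ebar ∧ ∀ e' ∈ Icc 0 ebar, d e' = d e → e' ≤ e}

/-- `d` is more transparent than `d'`: the fibers of `d` refine those of `d'`. -/
def MoreTransparent (ebar : ℝ) (d d' : ℝ → ℝ) : Prop :=
  ∀ e₁ ∈ Icc (0:ℝ) ebar, ∀ e₂ ∈ Icc (0:ℝ) ebar, d e₁ = d e₂ → d' e₁ = d' e₂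

/-- A policy is admissible if for every type `θ ∈ Θ`, the profit `π θ ·`
attains a maximum on the belief-compatible set. -/
def Admissible (ebar θl θh : ℝ) (π : ℝ → ℝ → ℝ) (d : ℝ → ℝ) : Prop :=
  ∀ θ ∈ Icc θl θh, ∃ e ∈ BCset ebar d, ∀ e' ∈ BCset ebar d, π θ e' ≤ π θ e

/-- The maximized profit `π_d(θ)` of type `θ` under policy `d`. -/
def profitFn (ebar : ℝ) (π : ℝ → ℝ → ℝ) (d : ℝ → ℝ) (θ : ℝ) : ℝ :=
  sSup (π θ '' BCset ebar d)

/-- The equilibrium emission `γ_d(θ)`: the least maximizer of `π θ ·` on the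
belief-compatible set. -/
def emissionFn (ebar : ℝ) (π : ℝ → ℝ → ℝ) (d : ℝ → ℝ) (θ : ℝ) : ℝ :=
  sInf {e | e ∈ BCset ebar d ∧ ∀ e' ∈ BCset ebar d, π θ e' ≤ π θ e}

/-- Expected profit `Π(d) = ∫ π_d(θ) f(θ) dθ`. -/
def ExpProfit (ebar θl θh : ℝ) (π : ℝ → ℝ → ℝ) (f : ℝ → ℝ) (d : ℝ → ℝ) : ℝ :=
  ∫ θ in Icc θl θh, profitFn ebar π d θ * f θ

/-- Expected emission `Γ(d) = ∫ γ_d(θ) f(θ) dθ`. -/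
def ExpEmission (ebar θl θh : ℝ) (π : ℝ → ℝ → ℝ) (f : ℝ → ℝ) (d : ℝ → ℝ) : ℝ :=
  ∫ θ in Icc θl θh, emissionFn ebar π d θ * f θ

/-- `d` is Pareto efficient: no admissible policy yields weakly higher expected
profit and weakly lower expected emission with at least one strict. -/
def Efficient (ebar θl θh : ℝ) (π : ℝ → ℝ → ℝ) (f : ℝ → ℝ) (d : ℝ → ℝ) : Prop :=
  ¬ ∃ d' : ℝ → ℝ, Admissible ebar θl θh π d' ∧
      ExpProfit ebar θl θh π f d ≤ ExpProfit ebar θl θh π f d' ∧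
      ExpEmission ebar θl θh π f d' ≤ ExpEmission ebar θl θh π f d ∧
      (ExpProfit ebar θl θh π f d < ExpProfit ebar θl θh π f d' ∨
        ExpEmission ebar θl θh π f d' < ExpEmission ebar θl θh π f d)

open Filter Topology

theorem StrictConcaveOn.isLeast_maximizers {s A : Set ℝ} {φ : ℝ → ℝ}
    (hφ : StrictConcaveOn ℝ s φ) (hA : A ⊆ s) (hmax : ∃ e ∈ A, ∀ e' ∈ A, φ e' ≤ φ e) :
    IsLeast {e | e ∈ A ∧ ∀ e' ∈ A, φ e' ≤ φ e} (sInf {e | e ∈ A ∧ ∀ e' ∈ A, φ e' ≤ φ e}) := by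
  set M := {e | e ∈ A ∧ ∀ e' ∈ A, φ e' ≤ φ e}
  have no_three_maximizers : ∀ x ∈ M, ∀ y ∈ M, ∀ z ∈ M, x < y → y < z → False := by
    intro x hx y hy z hz hxy hyz
    have hlt := hφ.lt_on_openSegment (hA hx.1) (hA hz.1) (hxy.trans hyz).ne
      (by rw [openSegment_eq_Ioo (hxy.trans hyz)]; exact ⟨hxy, hyz⟩)
    have := hx.2 y hy.1
    have := hz.2 y hy.1
    simp only [min_lt_iff] at hlt
    rcases hlt with h | h <;> linarith
  obtain ⟨e₀, he₀, he₀max⟩ := hmax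
  suffices ∃ e, IsLeast M e by
    obtain ⟨e, he⟩ := this
    exact he.csInf_eq ▸ he
  by_cases hleast : ∀ e ∈ M, e₀ ≤ e
  · exact ⟨e₀, ⟨he₀, he₀max⟩, hleast⟩
  push Not at hleast
  obtain ⟨e₁, he₁, he₁₀⟩ := hleast
  exact ⟨e₁, he₁, fun e he => le_of_not_gt fun h =>
    no_three_maximizers e he e₁ he₁ e₀ ⟨he₀, he₀max⟩ h he₁₀⟩

theorem abs_slope_sub_le_of_subgradient {F D : ℝ → ℝ} {t u : ℝ} (hu : u ≠ t)
    (hlow : F t + (u - t) * D t ≤ F u) (hupp : F u + (t - u) * D u ≤ F t) :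
    |slope F t u - D t| ≤ |D u - D t| := by
  have hut : 0 < |u - t| := abs_pos.2 (sub_ne_zero.2 hu)
  have hnum : |F u - F t - (u - t) * D t| ≤ |u - t| * |D u - D t| := by
    rw [← abs_mul]
    exact abs_le_abs_of_nonneg (by linarith) (by linarith)
  rw [slope_def_field, div_sub' (sub_ne_zero.2 hu), abs_div, div_le_iff₀ hut]
  linarith [hnum]

theorem hasDerivAt_of_subgradient {F D : ℝ → ℝ} {s : Set ℝ} {t : ℝ} (hs : s ∈ 𝓝 t)
    (hsub : ∀ θ ∈ s, ∀ θ' ∈ s, F θ + (θ' - θ) * D θ ≤ F θ') (hD : ContinuousAt D t) :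
    HasDerivAt F (D t) t := by
  have ht : t ∈ s := mem_of_mem_nhds hs
  rw [hasDerivAt_iff_tendsto_slope, tendsto_iff_norm_sub_tendsto_zero]
  have hbound : ∀ᶠ u in 𝓝[≠] t, ‖slope F t u - D t‖ ≤ |D u - D t| := by
    filter_upwards [nhdsWithin_le_nhds hs, self_mem_nhdsWithin] with u hu hut
    exact abs_slope_sub_le_of_subgradient hut (hsub t ht u hu) (hsub u hu t ht)
  have hlim : Tendsto (fun u => |D u - D t|) (𝓝[≠] t) (𝓝 0) := by
    have := ((hD.sub (continuousAt_const (y := D t))).abs).tendsto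
    simp only [Pi.sub_apply, sub_self, abs_zero] at this
    exact this.mono_left nhdsWithin_le_nhds
  exact squeeze_zero' (Eventually.of_forall fun _ => norm_nonneg _) hbound hlim

theorem continuousOn_of_monotoneOn_subgradient {F D : ℝ → ℝ} {x y : ℝ}
    (hD : MonotoneOn D (Icc x y))
    (hsub : ∀ θ ∈ Icc x y, ∀ θ' ∈ Icc x y, F θ + (θ' - θ) * D θ ≤ F θ') :
    ContinuousOn F (Icc x y) := by
  set K := max |D x| |D y|
  have hK0 : 0 ≤ K := (abs_nonneg _).trans (le_max_left _ _)
  have hK : ∀ θ ∈ Icc x y, |D θ| ≤ K := fun θ hθ =>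
    abs_le_max_abs_abs (hD ⟨le_rfl, hθ.1.trans hθ.2⟩ hθ hθ.1)
      (hD hθ ⟨hθ.1.trans hθ.2, le_rfl⟩ hθ.2)
  refine (LipschitzOnWith.of_dist_le_mul (K := K.toNNReal) fun θ hθ θ' hθ' => ?_).continuousOn
  have h1 : |(θ - θ') * D θ'| ≤ K * |θ - θ'| := by
    rw [abs_mul, mul_comm]; exact mul_le_mul_of_nonneg_right (hK θ' hθ') (abs_nonneg _)
  have h2 : |(θ - θ') * D θ| ≤ K * |θ - θ'| := by
    rw [abs_mul, mul_comm]; exact mul_le_mul_of_nonneg_right (hK θ hθ) (abs_nonneg _)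
  have := hsub θ' hθ' θ hθ
  have := hsub θ hθ θ' hθ'
  rw [Real.dist_eq, Real.dist_eq, Real.coe_toNNReal K hK0, abs_le]
  constructor <;> nlinarith [abs_le.1 h1, abs_le.1 h2]

theorem integral_eq_sub_of_monotoneOn_subgradient {F D : ℝ → ℝ} {x y : ℝ} (hxy : x ≤ y)
    (hD : MonotoneOn D (Icc x y))
    (hsub : ∀ θ ∈ Icc x y, ∀ θ' ∈ Icc x y, F θ + (θ' - θ) * D θ ≤ F θ') :
    ∫ t in x..y, D t = F y - F x := by
  refine integral_eq_of_hasDerivAt_off_countable_of_le F D hxy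
    hD.countable_not_continuousWithinAt (continuousOn_of_monotoneOn_subgradient hD hsub)
    (fun t ht => ?_) ((uIcc_of_le hxy ▸ hD).intervalIntegrable)
  have hnhds : Icc x y ∈ 𝓝 t := Icc_mem_nhds ht.1.1 ht.1.2
  refine hasDerivAt_of_subgradient hnhds hsub ?_
  by_contra hcont
  exact ht.2 ⟨Ioo_subset_Icc_self ht.1, fun h => hcont (h.continuousAt hnhds)⟩

theorem setIntegral_inter_Icc_nonneg_of_isLowerSet {g : ℝ → ℝ} {α β : ℝ} {L : Set ℝ}
    (hL : IsLowerSet L) (hg : ∀ c ∈ Icc α β, 0 ≤ ∫ t in α..c, g t) :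
    0 ≤ ∫ t in L ∩ Icc α β, g t := by
  set S := L ∩ Icc α β
  rcases S.eq_empty_or_nonempty with hS | ⟨t₀, ht₀⟩
  · simp [hS]
  have hbdd : BddAbove S := ⟨β, fun t ht => ht.2.2⟩
  have hα : α ∈ S := ⟨hL ht₀.2.1 ht₀.1, le_rfl, ht₀.2.1.trans ht₀.2.2⟩
  set c := sSup S
  have hc : c ∈ Icc α β := ⟨le_csSup hbdd hα, csSup_le ⟨t₀, ht₀⟩ fun t ht => ht.2.2⟩
  have hIco : Ico α c ⊆ S := fun t ht => by
    obtain ⟨t', ht', htt'⟩ := exists_lt_of_lt_csSup ⟨t₀, ht₀⟩ ht.2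
    exact ⟨hL htt'.le ht'.1, ht.1, htt'.le.trans ht'.2.2⟩
  have hS_ae : S =ᵐ[volume] Icc α c := by
    refine ae_eq_of_subset_of_measure_ge (fun t ht => ⟨ht.2.1, le_csSup hbdd ht⟩) ?_
      (hL.ordConnected.inter ordConnected_Icc).measurableSet.nullMeasurableSet
      measure_Icc_lt_top.ne
    rw [Real.volume_Icc, ← Real.volume_Ico]
    exact measure_mono hIco
  rw [setIntegral_congr_set hS_ae, integral_Icc_eq_integral_Ioc,
    ← intervalIntegral.integral_of_le hc.1]
  exact hg c hc

theorem setIntegral_mul_nonneg_of_antitone {g φ : ℝ → ℝ} {α β : ℝ}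
    (hg : IntegrableOn g (Icc α β)) (hG : ∀ c ∈ Icc α β, 0 ≤ ∫ t in α..c, g t)
    (hφ : Antitone φ) (hφβ : 0 ≤ φ β) :
    0 ≤ ∫ t in Icc α β, g t * φ t := by
  set M := φ α
  set E := {p : ℝ × ℝ | p.2 ≤ φ p.1}
  have hE : MeasurableSet E := measurableSet_le measurable_snd (hφ.measurable.comp measurable_fst)
  -- layer cake: `φ t` is the length of `(0, φ t]`
  have hlayer : ∀ t ∈ Icc α β, g t * φ t = ∫ s in Ioc 0 M, E.indicator (fun p => g p.1) (t, s) := by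
    intro t ht
    have hIoc : Ioc 0 M ∩ Iic (φ t) = Ioc 0 (φ t) := by
      rw [Ioc_inter_Iic, min_eq_right (hφ ht.1)]
    change _ = ∫ s in Ioc 0 M, (Iic (φ t)).indicator (fun _ => g t) s
    rw [integral_indicator measurableSet_Iic, Measure.restrict_restrict measurableSet_Iic,
      inter_comm, hIoc, setIntegral_const, Real.volume_real_Ioc_of_le (hφβ.trans (hφ ht.2)),
      smul_eq_mul, sub_zero, mul_comm]
  have hint : Integrable (Function.uncurry fun t s => E.indicator (fun p => g p.1) (t, s))
      ((volume.restrict (Icc α β)).prod (volume.restrict (Ioc 0 M))) :=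
    (hg.comp_fst _).indicator hE
  rw [setIntegral_congr_fun measurableSet_Icc hlayer, integral_integral_swap hint]
  refine integral_nonneg fun s => ?_
  change 0 ≤ ∫ t in Icc α β, {t | s ≤ φ t}.indicator g t
  rw [integral_indicator (measurableSet_le measurable_const hφ.measurable),
    Measure.restrict_restrict (measurableSet_le measurable_const hφ.measurable)]
  exact setIntegral_inter_Icc_nonneg_of_isLowerSet
    (fun t t' htt' ht => le_trans ht (hφ htt')) hG

theorem setIntegral_mul_nonneg_of_antitoneOn {g f : ℝ → ℝ} {α β : ℝ}
    (hg : IntegrableOn g (Icc α β)) (hG : ∀ c ∈ Icc α β, 0 ≤ ∫ t in α..c, g t)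
    (hf : AntitoneOn f (Icc α β)) (hfβ : 0 ≤ f β) :
    0 ≤ ∫ t in Icc α β, g t * f t := by
  rcases lt_or_ge β α with hβα | hαβ
  · simp [Icc_eq_empty_of_lt hβα]
  set φ := IccExtend hαβ fun t : Icc α β => f t
  have hφ : Antitone φ :=
    Antitone.comp_monotone (fun t t' h => hf t.2 t'.2 h) (monotone_projIcc hαβ)
  have hφf : EqOn (fun t => g t * φ t) (fun t => g t * f t) (Icc α β) := fun t ht => by
    simp only [φ, IccExtend_of_mem hαβ _ ht]
  rw [← setIntegral_congr_fun measurableSet_Icc hφf]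
  exact setIntegral_mul_nonneg_of_antitone hg hG hφ (by simpa [φ, IccExtend_right] using hfβ)

section Policy

variable {ebar θl θh θ : ℝ} {π : ℝ → ℝ → ℝ} {d : ℝ → ℝ}

theorem BCset_subset_Icc : BCset ebar d ⊆ Icc 0 ebar := fun _ h => h.1

theorem right_mem_BCset (hebar : 0 ≤ ebar) : ebar ∈ BCset ebar d :=
  ⟨⟨hebar, le_rfl⟩, fun _ he _ => he.2⟩

theorem BCset_id : BCset ebar (fun e => e) = Icc 0 ebar :=
  Subset.antisymm (fun _ he => he.1) fun _ he => ⟨he, fun _ _ h => h.le⟩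

theorem admissible_id (hebar : 0 ≤ ebar) (hπ : ∀ θ ∈ Icc θl θh, ContinuousOn (π θ) (Icc 0 ebar)) :
    Admissible ebar θl θh π (fun e => e) := by
  intro θ hθ
  obtain ⟨e, he, hmax⟩ := isCompact_Icc.exists_isMaxOn (nonempty_Icc.2 hebar) (hπ θ hθ)
  rw [BCset_id]
  exact ⟨e, he, fun e' he' => hmax he'⟩

theorem emissionFn_mem (hconc : StrictConcaveOn ℝ (Icc 0 ebar) (π θ))
    (hd : Admissible ebar θl θh π d) (hθ : θ ∈ Icc θl θh) :
    emissionFn ebar π d θ ∈ BCset ebar d ∧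
      ∀ e ∈ BCset ebar d, π θ e ≤ π θ (emissionFn ebar π d θ) :=
  (hconc.isLeast_maximizers BCset_subset_Icc (hd θ hθ)).1

theorem profitFn_eq (hconc : StrictConcaveOn ℝ (Icc 0 ebar) (π θ))
    (hd : Admissible ebar θl θh π d) (hθ : θ ∈ Icc θl θh) :
    profitFn ebar π d θ = π θ (emissionFn ebar π d θ) := by
  obtain ⟨hmem, hmax⟩ := emissionFn_mem hconc hd hθ
  exact IsGreatest.csSup_eq ⟨mem_image_of_mem _ hmem, by rintro _ ⟨e, he, rfl⟩; exact hmax e he⟩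

theorem profitFn_le_profitFn_id (hconc : StrictConcaveOn ℝ (Icc 0 ebar) (π θ))
    (hd : Admissible ebar θl θh π d) (hid : Admissible ebar θl θh π (fun e => e))
    (hθ : θ ∈ Icc θl θh) :
    profitFn ebar π d θ ≤ profitFn ebar π (fun e => e) θ := by
  rw [profitFn_eq hconc hd hθ, profitFn_eq hconc hid hθ]
  refine (emissionFn_mem hconc hid hθ).2 _ ?_
  rw [BCset_id]
  exact BCset_subset_Icc (emissionFn_mem hconc hd hθ).1

theorem emissionFn_eq_of_isLeast (hconc : StrictConcaveOn ℝ (Icc 0 ebar) (π θ))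
    (hd : Admissible ebar θl θh π d) (hθ : θ ∈ Icc θl θh)
    (hlow : IsLeast {e ∈ Icc (0:ℝ) ebar | π θ ebar ≤ π θ e} ebar) :
    emissionFn ebar π d θ = ebar := by
  obtain ⟨hmem, hmax⟩ := emissionFn_mem hconc hd hθ
  exact le_antisymm hmem.1.2 (hlow.2 ⟨hmem.1, hmax _ (right_mem_BCset hlow.1.1.1)⟩)

theorem expProfit_le_expProfit_id {f : ℝ → ℝ} (hconc : ∀ θ, StrictConcaveOn ℝ (Icc 0 ebar) (π θ))
    (hd : Admissible ebar θl θh π d) (hid : Admissible ebar θl θh π (fun e => e))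
    (hf0 : ∀ θ ∈ Icc θl θh, 0 ≤ f θ)
    (hintd : IntegrableOn (fun θ => profitFn ebar π d θ * f θ) (Icc θl θh))
    (hintid : IntegrableOn (fun θ => profitFn ebar π (fun e => e) θ * f θ) (Icc θl θh)) :
    ExpProfit ebar θl θh π f d ≤ ExpProfit ebar θl θh π f (fun e => e) :=
  setIntegral_mono_on hintd hintid measurableSet_Icc fun θ hθ =>
    mul_le_mul_of_nonneg_right (profitFn_le_profitFn_id (hconc θ) hd hid hθ) (hf0 θ hθ)

theorem Efficient.eq_of_dominated {f : ℝ → ℝ} {d' : ℝ → ℝ}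
    (heff : Efficient ebar θl θh π f d) (hd' : Admissible ebar θl θh π d')
    (hprofit : ExpProfit ebar θl θh π f d ≤ ExpProfit ebar θl θh π f d')
    (hemission : ExpEmission ebar θl θh π f d' ≤ ExpEmission ebar θl θh π f d) :
    ExpProfit ebar θl θh π f d = ExpProfit ebar θl θh π f d' ∧
      ExpEmission ebar θl θh π f d = ExpEmission ebar θl θh π f d' := by
  by_contra hne
  refine heff ⟨d', hd', hprofit, hemission, ?_⟩
  rcases not_and_or.1 hne with h | h
  · exact Or.inl (hprofit.lt_of_ne h)
  · exact Or.inr (hemission.lt_of_ne (Ne.symm h))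

end Policy

section LinearCost

variable {ebar θl θh a b : ℝ} {π0 : ℝ → ℝ} {π : ℝ → ℝ → ℝ} {d : ℝ → ℝ}

theorem strictConcaveOn_profit (hπ : ∀ θ e, π θ e = π0 e - θ * (a * e + b))
    (hπ0 : StrictConcaveOn ℝ (Icc 0 ebar) π0) (θ : ℝ) :
    StrictConcaveOn ℝ (Icc 0 ebar) (π θ) := by
  have hcost : ConvexOn ℝ (Icc 0 ebar) fun e => θ * (a * e + b) :=
    ⟨convex_Icc 0 ebar, fun x _ y _ p q _ _ hpq => le_of_eq <| by
      simp only [smul_eq_mul]; linear_combination -(θ * b) * hpq⟩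
  rw [show π θ = π0 - fun e => θ * (a * e + b) from funext (hπ θ)]
  exact hπ0.sub_convexOn hcost

theorem continuousOn_profit (hπ : ∀ θ e, π θ e = π0 e - θ * (a * e + b))
    (hπ0 : ContinuousOn π0 (Icc 0 ebar)) (θ : ℝ) :
    ContinuousOn (π θ) (Icc 0 ebar) := by
  rw [show π θ = fun e => π0 e - θ * (a * e + b) from funext (hπ θ)]
  fun_prop

/-- Single crossing: adding the optimality conditions of types `θ₁ < θ₂` gives
`a (θ₂ - θ₁) (γ_d(θ₂) - γ_d(θ₁)) ≤ 0`. -/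
theorem emissionFn_antitoneOn (hπ : ∀ θ e, π θ e = π0 e - θ * (a * e + b)) (ha : 0 < a)
    (hconc : ∀ θ, StrictConcaveOn ℝ (Icc 0 ebar) (π θ)) (hd : Admissible ebar θl θh π d) :
    AntitoneOn (emissionFn ebar π d) (Icc θl θh) := by
  intro θ₁ hθ₁ θ₂ hθ₂ h₁₂
  rcases h₁₂.eq_or_lt with rfl | h₁₂
  · exact le_rfl
  have h₁ := (emissionFn_mem (hconc θ₁) hd hθ₁).2 _ (emissionFn_mem (hconc θ₂) hd hθ₂).1
  have h₂ := (emissionFn_mem (hconc θ₂) hd hθ₂).2 _ (emissionFn_mem (hconc θ₁) hd hθ₁).1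
  rw [hπ, hπ] at h₁ h₂
  by_contra! hlt
  nlinarith [mul_pos ha (mul_pos (sub_pos.2 h₁₂) (sub_pos.2 hlt))]

theorem profitFn_subgradient (hπ : ∀ θ e, π θ e = π0 e - θ * (a * e + b))
    (hconc : ∀ θ, StrictConcaveOn ℝ (Icc 0 ebar) (π θ)) (hd : Admissible ebar θl θh π d)
    {θ θ' : ℝ} (hθ : θ ∈ Icc θl θh) (hθ' : θ' ∈ Icc θl θh) :
    profitFn ebar π d θ + (θ' - θ) * -(a * emissionFn ebar π d θ + b) ≤ profitFn ebar π d θ' := by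
  have h := (emissionFn_mem (hconc θ') hd hθ').2 _ (emissionFn_mem (hconc θ) hd hθ).1
  rw [profitFn_eq (hconc θ) hd hθ, profitFn_eq (hconc θ') hd hθ']
  rw [hπ, hπ] at h ⊢
  linarith

theorem profitFn_sub_eq (hπ : ∀ θ e, π θ e = π0 e - θ * (a * e + b)) (ha : 0 < a)
    (hconc : ∀ θ, StrictConcaveOn ℝ (Icc 0 ebar) (π θ)) (hd : Admissible ebar θl θh π d)
    {x y : ℝ} (hx : θl ≤ x) (hxy : x ≤ y) (hy : y ≤ θh) :
    profitFn ebar π d y - profitFn ebar π d x =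
      -(a * ∫ t in x..y, emissionFn ebar π d t) - b * (y - x) := by
  have hsub : Icc x y ⊆ Icc θl θh := Icc_subset_Icc hx hy
  have hγ : AntitoneOn (emissionFn ebar π d) (Icc x y) :=
    (emissionFn_antitoneOn hπ ha hconc hd).mono hsub
  have hD : MonotoneOn (fun t => -(a * emissionFn ebar π d t + b)) (Icc x y) :=
    fun s hs t ht hst => neg_le_neg (by nlinarith [hγ hs ht hst])
  rw [← integral_eq_sub_of_monotoneOn_subgradient hxy hD
    fun θ hθ θ' hθ' => profitFn_subgradient hπ hconc hd (hsub hθ) (hsub hθ'),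
    intervalIntegral.integral_neg, intervalIntegral.integral_add
      (((uIcc_of_le hxy ▸ hγ).intervalIntegrable).const_mul a) intervalIntegrable_const,
    intervalIntegral.integral_const_mul, intervalIntegral.integral_const, smul_eq_mul]
  ring

theorem integral_emissionFn_sub_nonneg (hπ : ∀ θ e, π θ e = π0 e - θ * (a * e + b))
    (ha : 0 < a) (hconc : ∀ θ, StrictConcaveOn ℝ (Icc 0 ebar) (π θ))
    (hd : Admissible ebar θl θh π d) (hid : Admissible ebar θl θh π (fun e => e))
    {θb c : ℝ} (hθb : θl ≤ θb) (hc : c ∈ Icc θb θh)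
    (hlow : IsLeast {e ∈ Icc (0:ℝ) ebar | π θb ebar ≤ π θb e} ebar) :
    0 ≤ ∫ t in θb..c, (emissionFn ebar π d t - emissionFn ebar π (fun e => e) t) := by
  have hθbΘ : θb ∈ Icc θl θh := ⟨hθb, hc.1.trans hc.2⟩
  have hint : ∀ d', Admissible ebar θl θh π d' →
      IntervalIntegrable (emissionFn ebar π d') volume θb c := fun d' hd' =>
    ((emissionFn_antitoneOn hπ ha hconc hd').mono
      (uIcc_of_le hc.1 ▸ Icc_subset_Icc hθb hc.2)).intervalIntegrable
  have hstart : profitFn ebar π d θb = profitFn ebar π (fun e => e) θb := by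
    rw [profitFn_eq (hconc θb) hd hθbΘ, profitFn_eq (hconc θb) hid hθbΘ,
      emissionFn_eq_of_isLeast (hconc θb) hd hθbΘ hlow,
      emissionFn_eq_of_isLeast (hconc θb) hid hθbΘ hlow]
  have hend := profitFn_le_profitFn_id (hconc c) hd hid ⟨hθb.trans hc.1, hc.2⟩
  have hpd := profitFn_sub_eq hπ ha hconc hd hθb hc.1 hc.2
  have hpid := profitFn_sub_eq hπ ha hconc hid hθb hc.1 hc.2
  rw [intervalIntegral.integral_sub (hint d hd) (hint _ hid)]
  exact (mul_nonneg_iff_of_pos_left ha).1 (by linarith)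

theorem expEmission_id_le (hπ : ∀ θ e, π θ e = π0 e - θ * (a * e + b))
    (ha : 0 < a) (hconc : ∀ θ, StrictConcaveOn ℝ (Icc 0 ebar) (π θ))
    (hd : Admissible ebar θl θh π d) (hid : Admissible ebar θl θh π (fun e => e))
    {f : ℝ → ℝ} (hf0 : ∀ θ ∈ Icc θl θh, 0 ≤ f θ)
    (hintd : IntegrableOn (fun θ => emissionFn ebar π d θ * f θ) (Icc θl θh))
    (hintid : IntegrableOn (fun θ => emissionFn ebar π (fun e => e) θ * f θ) (Icc θl θh))
    {θb : ℝ} (hθb : θb ∈ Icc θl θh)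
    (hlow : ∀ θ ∈ Icc θl θb, IsLeast {e ∈ Icc (0:ℝ) ebar | π θ ebar ≤ π θ e} ebar)
    (hf : AntitoneOn f (Icc θb θh)) :
    ExpEmission ebar θl θh π f (fun e => e) ≤ ExpEmission ebar θl θh π f d := by
  set g := fun t => emissionFn ebar π d t - emissionFn ebar π (fun e => e) t
  have hγ : ∀ d', Admissible ebar θl θh π d' →
      IntegrableOn (emissionFn ebar π d') (Icc θb θh) := fun d' hd' =>
    ((emissionFn_antitoneOn hπ ha hconc hd').mono
      (Icc_subset_Icc_left hθb.1)).integrableOn_isCompact isCompact_Icc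
  have hg0 : ∀ t ∈ Icc θl θh \ Icc θb θh, g t * f t = 0 := by
    rintro t ⟨ht, htb⟩
    have htb : t ∈ Icc θl θb := ⟨ht.1, le_of_lt (by simpa [ht.2] using htb)⟩
    have htΘ : t ∈ Icc θl θh := ⟨ht.1, ht.2⟩
    simp only [g, emissionFn_eq_of_isLeast (hconc t) hd htΘ (hlow t htb),
      emissionFn_eq_of_isLeast (hconc t) hid htΘ (hlow t htb), sub_self, zero_mul]
  rw [ExpEmission, ExpEmission, ← sub_nonneg, ← integral_sub hintd hintid]
  simp_rw [← sub_mul]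
  rw [setIntegral_eq_of_subset_of_forall_sdiff_eq_zero measurableSet_Icc
    (Icc_subset_Icc_left hθb.1) hg0]
  exact setIntegral_mul_nonneg_of_antitoneOn ((hγ d hd).sub (hγ _ hid))
    (fun c hc => integral_emissionFn_sub_nonneg hπ ha hconc hd hid hθb.1 hc
      (hlow θb ⟨hθb.1, le_rfl⟩)) hf (hf0 θh ⟨hθb.1.trans hθb.2, le_rfl⟩)

end LinearCost

theorem full_disclosure_only_efficient_pos_general (ebar θl θh : ℝ) (hebar : 0 < ebar)
    (π0 : ℝ → ℝ) (a b : ℝ) (ha : 0 < a) (π : ℝ → ℝ → ℝ)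
    (hπ : ∀ θ e, π θ e = π0 e - θ * (a * e + b))
    (hπ0C2 : ContDiffOn ℝ 2 π0 (Icc 0 ebar))
    (hπ0conc : StrictConcaveOn ℝ (Icc 0 ebar) π0)
    (f : ℝ → ℝ)
    (hf0 : ∀ θ ∈ Icc θl θh, 0 ≤ f θ)
    (hint : ∀ d : ℝ → ℝ, Admissible ebar θl θh π d →
        IntegrableOn (fun θ => profitFn ebar π d θ * f θ) (Icc θl θh) ∧
        IntegrableOn (fun θ => emissionFn ebar π d θ * f θ) (Icc θl θh))
    (elow : ℝ → ℝ)
    (helow : ∀ θ ∈ Icc θl θh,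
        IsLeast {e ∈ Icc (0:ℝ) ebar | π θ ebar ≤ π θ e} (elow θ))
    (θblack : ℝ) (hθblack : θblack ∈ Icc θl θh)
    (hirr : ∀ θ ∈ Icc θl θblack, elow θ = ebar)
    (hmono : AntitoneOn f (Icc θblack θh)) :
    (∀ d : ℝ → ℝ, Admissible ebar θl θh π d →
        ExpProfit ebar θl θh π f d ≤ ExpProfit ebar θl θh π f (fun e => e) ∧
          ExpEmission ebar θl θh π f (fun e => e) ≤ ExpEmission ebar θl θh π f d) ∧
      ∀ d : ℝ → ℝ, Admissible ebar θl θh π d → Efficient ebar θl θh π f d →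
        ExpProfit ebar θl θh π f d = ExpProfit ebar θl θh π f (fun e => e) ∧
          ExpEmission ebar θl θh π f d = ExpEmission ebar θl θh π f (fun e => e) := by
  have hconc := strictConcaveOn_profit hπ hπ0conc
  have hid : Admissible ebar θl θh π (fun e => e) :=
    admissible_id hebar.le fun θ _ => continuousOn_profit hπ hπ0C2.continuousOn θ
  have hlow : ∀ θ ∈ Icc θl θblack, IsLeast {e ∈ Icc (0:ℝ) ebar | π θ ebar ≤ π θ e} ebar :=
    fun θ hθ => hirr θ hθ ▸ helow θ ⟨hθ.1, hθ.2.trans hθblack.2⟩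
  have hdom : ∀ d, Admissible ebar θl θh π d →
      ExpProfit ebar θl θh π f d ≤ ExpProfit ebar θl θh π f (fun e => e) ∧
        ExpEmission ebar θl θh π f (fun e => e) ≤ ExpEmission ebar θl θh π f d := fun d hd =>
    ⟨expProfit_le_expProfit_id hconc hd hid hf0 (hint d hd).1 (hint _ hid).1,
      expEmission_id_le hπ ha hconc hd hid hf0 (hint d hd).2 (hint _ hid).2 hθblack hlow hmono⟩
  exact ⟨hdom, fun d hd heff => heff.eq_of_dominated hid (hdom d hd).1 (hdom d hd).2⟩

/-- Proposition 6, case `a > 0`: if the low types are irresponsive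
(`e̲ = ē` on `[θ̲, θ_▲]`) and `f` is nonincreasing on `[θ_▲, θ̄]`, then full disclosure
Pareto dominates every admissible policy. -/
theorem full_disclosure_only_efficient_pos (ebar θl θh : ℝ) (hebar : 0 < ebar)
    (hθ : θl ≤ θh)
    (π0 : ℝ → ℝ) (a b : ℝ) (ha : 0 < a) (π : ℝ → ℝ → ℝ)
    (hπ : ∀ θ e, π θ e = π0 e - θ * (a * e + b))
    (hπ0C2 : ContDiffOn ℝ 2 π0 (Icc 0 ebar))
    (hπ0conc : StrictConcaveOn ℝ (Icc 0 ebar) π0)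
    (hIR : ∀ θ ∈ Icc θl θh, π θ 0 < π θ ebar)
    (f : ℝ → ℝ)
    (hfC1 : ContDiffOn ℝ 1 f (Ioo θl θh))
    (hfpos : ∀ θ ∈ Ioo θl θh, 0 < f θ)
    (hf0 : ∀ θ ∈ Icc θl θh, 0 ≤ f θ)
    (hf1 : (∫ θ in Icc θl θh, f θ) = 1)
    (hint : ∀ d : ℝ → ℝ, Admissible ebar θl θh π d →
        IntegrableOn (fun θ => profitFn ebar π d θ * f θ) (Icc θl θh) ∧
        IntegrableOn (fun θ => emissionFn ebar π d θ * f θ) (Icc θl θh))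
    (elow : ℝ → ℝ)
    (helow : ∀ θ ∈ Icc θl θh,
        IsLeast {e ∈ Icc (0:ℝ) ebar | π θ ebar ≤ π θ e} (elow θ))
    (θblack : ℝ) (hθblack : θblack ∈ Icc θl θh)
    (hirr : ∀ θ ∈ Icc θl θblack, elow θ = ebar)
    (hmono : AntitoneOn f (Icc θblack θh)) :
    (∀ d : ℝ → ℝ, Admissible ebar θl θh π d →
        ExpProfit ebar θl θh π f d ≤ ExpProfit ebar θl θh π f (fun e => e) ∧
          ExpEmission ebar θl θh π f (fun e => e) ≤ ExpEmission ebar θl θh π f d) ∧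
      ∀ d : ℝ → ℝ, Admissible ebar θl θh π d → Efficient ebar θl θh π f d →
        ExpProfit ebar θl θh π f d = ExpProfit ebar θl θh π f (fun e => e) ∧
          ExpEmission ebar θl θh π f d = ExpEmission ebar θl θh π f (fun e => e) :=
  full_disclosure_only_efficient_pos_general ebar θl θh hebar π0 a b ha π hπ hπ0C2 hπ0conc f hf0
    hint elow helow θblack hθblack hirr hmono
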